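/- The Roper–Rutkowski representation of the Black–Scholes price holds: for all S > 0, K > 0 and σ > 0, C_BS(S, K, σ) = max(S − K, 0) + S · ∫_0^{σ√T} φ( log(S/K)/v + v/2 ) dv. -/

import Mathlib

open Real Set Filter

/-- Standard normal cdf. -/
noncomputable def stdNormalCDF (x : ℝ) : ℝ :=
  ∫ t in Set.Iio x, Real.exp (-t ^ 2 / 2) / Real.sqrt (2 * Real.pi)

/-- Black–Scholes call price with maturity `T`. -/
noncomputable def C_BS (T S K σ : ℝ) : ℝ :=
  S * stdNormalCDF (Real.log (S / K) / (σ * Real.sqrt T) + σ * Real.sqrt T / 2) -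
  K * stdNormalCDF (Real.log (S / K) / (σ * Real.sqrt T) - σ * Real.sqrt T / 2)

/-- Standard normal density. -/
noncomputable def stdNormalPDF (x : ℝ) : ℝ :=
  Real.exp (-x ^ 2 / 2) / Real.sqrt (2 * Real.pi)

/-!
View the Black–Scholes price as a function `bsPrice S K v` of the total volatility `v = σ√T`.
Since `K φ(d₂) = S φ(d₁)` and `d₁ = d₂ + v`, the chain rule gives
`∂ᵥ bsPrice = S φ(d₁) (∂ᵥd₁ - ∂ᵥd₂) = S φ(d₁)`. As `v → 0⁺`, `d₁` and `d₂` tend to `±∞` with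
the sign of `log (S/K)`, so the price tends to `max (S - K) 0`; the representation is then the
fundamental theorem of calculus on `(0, σ√T]`.
-/

open MeasureTheory ProbabilityTheory Topology

theorem stdNormalPDF_eq_gaussianPDFReal : stdNormalPDF = gaussianPDFReal 0 1 := by
  ext x
  simp [stdNormalPDF, gaussianPDFReal, div_eq_inv_mul]

@[fun_prop]
theorem continuous_stdNormalPDF : Continuous stdNormalPDF := by
  unfold stdNormalPDF; fun_prop

theorem stdNormalPDF_nonneg (x : ℝ) : 0 ≤ stdNormalPDF x := by
  unfold stdNormalPDF; positivity

theorem stdNormalPDF_le (x : ℝ) : stdNormalPDF x ≤ (√(2 * π))⁻¹ := by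
  rw [stdNormalPDF, div_eq_mul_inv]
  refine mul_le_of_le_one_left (by positivity) (exp_le_one_iff.mpr ?_)
  nlinarith [sq_nonneg x]

theorem integrable_stdNormalPDF : Integrable stdNormalPDF := by
  rw [stdNormalPDF_eq_gaussianPDFReal]
  exact integrable_gaussianPDFReal 0 1

theorem intervalIntegrable_stdNormalPDF_comp {f : ℝ → ℝ} (hf : Measurable f) (a b : ℝ) :
    IntervalIntegrable (fun x => stdNormalPDF (f x)) volume a b := by
  refine (intervalIntegrable_const (c := (√(2 * π))⁻¹)).mono_fun'
    (continuous_stdNormalPDF.measurable.comp hf).aestronglyMeasurable (ae_of_all _ fun x => ?_)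
  simpa only [norm_of_nonneg (stdNormalPDF_nonneg _)] using stdNormalPDF_le (f x)

theorem stdNormalCDF_eq_integral_Iic (x : ℝ) :
    stdNormalCDF x = ∫ t in Iic x, stdNormalPDF t :=
  integral_Iic_eq_integral_Iio.symm

theorem stdNormalCDF_eq_cdf : stdNormalCDF = cdf (gaussianReal 0 1) := by
  ext x
  rw [cdf_eq_real, measureReal_def, gaussianReal_apply_eq_integral 0 one_ne_zero,
    ENNReal.toReal_ofReal (integral_nonneg fun _ => gaussianPDFReal_nonneg 0 1 _),
    stdNormalCDF_eq_integral_Iic, stdNormalPDF_eq_gaussianPDFReal]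

theorem tendsto_stdNormalCDF_atTop : Tendsto stdNormalCDF atTop (𝓝 1) :=
  stdNormalCDF_eq_cdf ▸ tendsto_cdf_atTop _

theorem tendsto_stdNormalCDF_atBot : Tendsto stdNormalCDF atBot (𝓝 0) :=
  stdNormalCDF_eq_cdf ▸ tendsto_cdf_atBot _

theorem hasDerivAt_stdNormalCDF (x : ℝ) : HasDerivAt stdNormalCDF (stdNormalPDF x) x := by
  have hN : stdNormalCDF = fun y => stdNormalCDF 0 + ∫ t in (0 : ℝ)..y, stdNormalPDF t := by
    ext y
    rw [stdNormalCDF_eq_integral_Iic, stdNormalCDF_eq_integral_Iic,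
      ← intervalIntegral.integral_Iic_sub_Iic integrable_stdNormalPDF.integrableOn
        integrable_stdNormalPDF.integrableOn, add_sub_cancel]
  rw [hN]
  exact (intervalIntegral.integral_hasDerivAt_right integrable_stdNormalPDF.intervalIntegrable
    (continuous_stdNormalPDF.stronglyMeasurableAtFilter _ _)
    continuous_stdNormalPDF.continuousAt).const_add _

@[fun_prop]
theorem continuous_stdNormalCDF : Continuous stdNormalCDF :=
  continuous_iff_continuousAt.mpr fun x => (hasDerivAt_stdNormalCDF x).continuousAt

theorem stdNormalPDF_div_sub_half (L : ℝ) {v : ℝ} (hv : v ≠ 0) :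
    stdNormalPDF (L / v - v / 2) = exp L * stdNormalPDF (L / v + v / 2) := by
  have hexponent : -(L / v - v / 2) ^ 2 / 2 = L + -(L / v + v / 2) ^ 2 / 2 := by
    field_simp; ring
  rw [stdNormalPDF, stdNormalPDF, hexponent, exp_add, mul_div_assoc]

noncomputable def bsPrice (S K v : ℝ) : ℝ :=
  S * stdNormalCDF (log (S / K) / v + v / 2) - K * stdNormalCDF (log (S / K) / v - v / 2)

section BlackScholes

variable {S K : ℝ}

theorem hasDerivAt_bsPrice (hS : 0 < S) (hK : 0 < K) {v : ℝ} (hv : v ≠ 0) :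
    HasDerivAt (bsPrice S K) (S * stdNormalPDF (log (S / K) / v + v / 2)) v := by
  set L := log (S / K)
  have hinv : HasDerivAt (fun w => L / w) (-L / v ^ 2) v := by
    simpa only [div_eq_mul_inv, neg_mul, mul_neg] using (hasDerivAt_inv hv).const_mul L
  have hhalf : HasDerivAt (fun w : ℝ => w / 2) (1 / 2) v := (hasDerivAt_id v).div_const 2
  have hd₁ : HasDerivAt (fun w => stdNormalCDF (L / w + w / 2))
      (stdNormalPDF (L / v + v / 2) * (-L / v ^ 2 + 1 / 2)) v :=
    (hasDerivAt_stdNormalCDF _).comp v (hinv.add hhalf)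
  have hd₂ : HasDerivAt (fun w => stdNormalCDF (L / w - w / 2))
      (stdNormalPDF (L / v - v / 2) * (-L / v ^ 2 - 1 / 2)) v :=
    (hasDerivAt_stdNormalCDF _).comp v (hinv.sub hhalf)
  have hsymm : K * stdNormalPDF (L / v - v / 2) = S * stdNormalPDF (L / v + v / 2) := by
    rw [stdNormalPDF_div_sub_half L hv, exp_log (div_pos hS hK), ← mul_assoc,
      mul_div_cancel₀ S hK.ne']
  refine ((hd₁.const_mul S).sub (hd₂.const_mul K)).congr_deriv ?_
  linear_combination (L / v ^ 2 + 1 / 2) * hsymm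

theorem tendsto_bsPrice_nhdsGT_zero (hS : 0 < S) (hK : 0 < K) :
    Tendsto (bsPrice S K) (𝓝[>] 0) (𝓝 (max (S - K) 0)) := by
  unfold bsPrice
  set L := log (S / K) with hL_def
  have hhalf : Tendsto (fun v : ℝ => v / 2) (𝓝[>] 0) (𝓝 0) := by
    simpa using (tendsto_id.mono_left nhdsWithin_le_nhds :
      Tendsto (fun v : ℝ => v) (𝓝[>] 0) (𝓝 0)).div_const 2
  have hneg_half : Tendsto (fun v : ℝ => -(v / 2)) (𝓝[>] 0) (𝓝 0) := by
    simpa using hhalf.neg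
  rcases lt_trichotomy L 0 with hL | hL | hL
  · have hSK : S ≤ K := ((div_lt_one hK).mp ((log_neg_iff (div_pos hS hK)).mp hL)).le
    have hLv : Tendsto (fun v => L / v) (𝓝[>] 0) atBot := by
      simpa only [div_eq_mul_inv] using tendsto_inv_nhdsGT_zero.const_mul_atTop_of_neg hL
    have hd₁ := tendsto_stdNormalCDF_atBot.comp (hLv.atBot_add hhalf)
    have hd₂ := tendsto_stdNormalCDF_atBot.comp (hLv.atBot_add hneg_half)
    simpa [← hL_def, ← sub_eq_add_neg, max_eq_right (sub_nonpos.mpr hSK)]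
      using (hd₁.const_mul S).sub (hd₂.const_mul K)
  · have hSK : S = K :=
      (div_eq_one_iff_eq hK.ne').mp (eq_one_of_pos_of_log_eq_zero (div_pos hS hK) hL)
    subst hSK
    have h := (continuous_stdNormalCDF.tendsto 0).comp hhalf
    simpa [← hL_def, hL] using ((h.const_mul S).sub
      ((continuous_stdNormalCDF.tendsto 0).comp hneg_half |>.const_mul S))
  · have hSK : K ≤ S := ((one_lt_div hK).mp ((log_pos_iff (div_pos hS hK).le).mp hL)).le
    have hLv : Tendsto (fun v => L / v) (𝓝[>] 0) atTop := by
      simpa only [div_eq_mul_inv] using tendsto_inv_nhdsGT_zero.const_mul_atTop hL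
    have hd₁ := tendsto_stdNormalCDF_atTop.comp (hLv.atTop_add hhalf)
    have hd₂ := tendsto_stdNormalCDF_atTop.comp (hLv.atTop_add hneg_half)
    simpa [← hL_def, ← sub_eq_add_neg, max_eq_left (sub_nonneg.mpr hSK)]
      using (hd₁.const_mul S).sub (hd₂.const_mul K)

theorem bsPrice_eq_max_add_integral (hS : 0 < S) (hK : 0 < K) {a : ℝ} (ha : 0 < a) :
    bsPrice S K a =
      max (S - K) 0 + S * ∫ v in (0 : ℝ)..a, stdNormalPDF (log (S / K) / v + v / 2) := by
  have hint :
      IntervalIntegrable (fun v => S * stdNormalPDF (log (S / K) / v + v / 2)) volume 0 a :=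
    (intervalIntegrable_stdNormalPDF_comp (by fun_prop) 0 a).const_mul S
  rw [← intervalIntegral.integral_const_mul,
    intervalIntegral.integral_eq_sub_of_hasDerivAt_of_tendsto ha
      (fun v hv => hasDerivAt_bsPrice hS hK hv.1.ne') hint (tendsto_bsPrice_nhdsGT_zero hS hK)
      (hasDerivAt_bsPrice hS hK ha.ne').continuousAt.continuousWithinAt.tendsto]
  ring

end BlackScholes

/-- Roper–Rutkowski representation of the Black–Scholes price. -/
theorem C_BS_roper_rutkowski (T : ℝ) (hT : 0 < T) (S K σ : ℝ)
    (hS : 0 < S) (hK : 0 < K) (hσ : 0 < σ) :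
    C_BS T S K σ = max (S - K) 0 +
      S * ∫ v in (0 : ℝ)..(σ * Real.sqrt T),
        stdNormalPDF (Real.log (S / K) / v + v / 2) :=
  bsPrice_eq_max_add_integral hS hK (mul_pos hσ (sqrt_pos.mpr hT))
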